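/- arXiv:2011.08909 — 4 statements merged into one kernel-verified Lean document; each statement's English description precedes it below -/
import Mathlib

section
/- The unique fixed point of the operator (BR)(s,a,g) = (1-γ) p(s'=g|s,a)/p(g) + γ E_{s'∼p(·|s,a), a'∼π(·|s')}[R(s',a',g)] equals the ratio p_+^π(g|s,a)/p(g), where p_+^π is the discounted future state distribution under policy π. -/
open Matrix

/-- The state-transition matrix induced by policy `π`:
`Tπ(s', s'') = Σ_{a'} π(a'∣s') p(s''∣s',a')`. -/
noncomputable def policyChain {S A : Type*} [Fintype S] [Fintype A]
    (p : S → A → S → ℝ) (π : S → A → ℝ) : Matrix S S ℝ :=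
  Matrix.of fun s' s'' => ∑ a', π s' a' * p s' a' s''

/-- The discounted future state distribution under policy `π`:
`p₊^π(g∣s,a) = (1-γ) Σ_{Δ≥0} γ^Δ P_π(s_{t+1+Δ} = g ∣ s_t = s, a_t = a)`,
where `P_π(s_{t+1+Δ} = g ∣ s,a) = Σ_{s'} p(s'∣s,a) (Tπ^Δ)(s', g)`. -/
noncomputable def discountedOccupancy {S A : Type*} [Fintype S] [Fintype A]
    [DecidableEq S] (γ : ℝ) (p : S → A → S → ℝ) (π : S → A → ℝ)
    (s : S) (a : A) (g : S) : ℝ :=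
  (1 - γ) * ∑' Δ : ℕ, γ ^ Δ * ∑ s', p s a s' * ((policyChain p π) ^ Δ) s' g

/-- The C-learning Bellman operator with reward `p(s'=g∣s,a)/p(g)`:
`(BR)(s,a,g) = (1-γ) p(g∣s,a)/pg(g) + γ Σ_{s'} p(s'∣s,a) Σ_{a'} π(a'∣s') R(s',a',g)`. -/
noncomputable def ratioBellmanOp {S A : Type*} [Fintype S] [Fintype A]
    (γ : ℝ) (p : S → A → S → ℝ) (π : S → A → ℝ) (pg : S → ℝ)
    (R : S → A → S → ℝ) : S → A → S → ℝ :=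
  fun s a g => (1 - γ) * p s a g / pg g +
    γ * ∑ s', p s a s' * ∑ a', π s' a' * R s' a' g

section aux
variable {S A : Type*} [Fintype S] [Fintype A] [DecidableEq S]
variable {γ : ℝ} {p : S → A → S → ℝ} {π : S → A → ℝ}

lemma chain_pow_nonneg (hpnn : ∀ s a s', 0 ≤ p s a s') (hπnn : ∀ s a, 0 ≤ π s a) :
    ∀ (n : ℕ) (s g : S), 0 ≤ ((policyChain p π) ^ n) s g := by
  intro n
  induction n with
  | zero =>
    intro s g
    simp [Matrix.one_apply]
    positivity
  | succ n ih =>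
    intro s g
    rw [pow_succ, Matrix.mul_apply]
    refine Finset.sum_nonneg fun k _ => mul_nonneg (ih s k) ?_
    exact Finset.sum_nonneg fun a _ => mul_nonneg (hπnn k a) (hpnn k a g)

lemma chain_pow_row (hprow : ∀ s a, ∑ s', p s a s' = 1) (hπrow : ∀ s, ∑ a, π s a = 1) :
    ∀ (n : ℕ) (s : S), ∑ g, ((policyChain p π) ^ n) s g = 1 := by
  intro n
  induction n with
  | zero => intro s; simp [Matrix.one_apply]
  | succ n ih =>
    intro s
    simp only [pow_succ, Matrix.mul_apply]
    rw [Finset.sum_comm]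
    have : ∀ k, ∑ g, ((policyChain p π) ^ n) s k * policyChain p π k g
        = ((policyChain p π) ^ n) s k := by
      intro k
      rw [← Finset.mul_sum]
      have : ∑ g, policyChain p π k g = 1 := by
        show ∑ g, ∑ a', π k a' * p k a' g = 1
        rw [Finset.sum_comm]
        simp only [← Finset.mul_sum]
        simp [hprow, hπrow]
      rw [this, mul_one]
    simp only [this]
    exact ih s

lemma chain_pow_le_one (hpnn : ∀ s a s', 0 ≤ p s a s') (hπnn : ∀ s a, 0 ≤ π s a)
    (hprow : ∀ s a, ∑ s', p s a s' = 1) (hπrow : ∀ s, ∑ a, π s a = 1)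
    (n : ℕ) (s g : S) : ((policyChain p π) ^ n) s g ≤ 1 := by
  calc ((policyChain p π) ^ n) s g ≤ ∑ g', ((policyChain p π) ^ n) s g' :=
        Finset.single_le_sum (fun g' _ => chain_pow_nonneg hpnn hπnn n s g') (Finset.mem_univ g)
    _ = 1 := chain_pow_row hprow hπrow n s

lemma summable_aux (hγ0 : 0 ≤ γ) (hγ1 : γ < 1) (f : ℕ → ℝ)
    (h0 : ∀ n, 0 ≤ f n) (h1 : ∀ n, f n ≤ 1) :
    Summable (fun n => γ ^ n * f n) := by
  refine Summable.of_nonneg_of_le (fun n => mul_nonneg (pow_nonneg hγ0 n) (h0 n))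
    (fun n => ?_) (summable_geometric_of_lt_one hγ0 hγ1)
  exact mul_le_of_le_one_right (pow_nonneg hγ0 n) (h1 n)

variable (hγ0 : 0 ≤ γ) (hγ1 : γ < 1)
variable (hpnn : ∀ s a s', 0 ≤ p s a s') (hprow : ∀ s a, ∑ s', p s a s' = 1)
variable (hπnn : ∀ s a, 0 ≤ π s a) (hπrow : ∀ s, ∑ a, π s a = 1)

include hpnn hπnn in
/-- `c s a g Δ := ∑_{s'} p(s'|s,a) (M^Δ)(s',g)` lies in `[0,1]`, hence summable. -/
lemma c_nonneg (s : S) (a : A) (g : S) (Δ : ℕ) :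
    0 ≤ ∑ s', p s a s' * ((policyChain p π) ^ Δ) s' g :=
  Finset.sum_nonneg fun s' _ => mul_nonneg (hpnn s a s') (chain_pow_nonneg hpnn hπnn Δ s' g)

include hpnn hπnn hprow hπrow in
lemma c_le_one (s : S) (a : A) (g : S) (Δ : ℕ) :
    ∑ s', p s a s' * ((policyChain p π) ^ Δ) s' g ≤ 1 := by
  calc ∑ s', p s a s' * ((policyChain p π) ^ Δ) s' g
      ≤ ∑ s', p s a s' * 1 := Finset.sum_le_sum fun s' _ =>
        mul_le_mul_of_nonneg_left (chain_pow_le_one hpnn hπnn hprow hπrow Δ s' g) (hpnn s a s')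
    _ = 1 := by simp [hprow s a]

include hγ0 hγ1 hpnn hπnn hprow hπrow in
lemma c_summable (s : S) (a : A) (g : S) :
    Summable (fun Δ : ℕ => γ ^ Δ * ∑ s', p s a s' * ((policyChain p π) ^ Δ) s' g) :=
  summable_aux hγ0 hγ1 _ (c_nonneg hpnn hπnn s a g) (c_le_one hpnn hprow hπnn hπrow s a g)

include hγ0 hγ1 hpnn hπnn hprow hπrow in
lemma pow_summable (s' g : S) :
    Summable (fun Δ : ℕ => γ ^ Δ * ((policyChain p π) ^ (Δ + 1)) s' g) :=
  summable_aux hγ0 hγ1 _ (fun Δ => chain_pow_nonneg hpnn hπnn (Δ+1) s' g)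
    (fun Δ => chain_pow_le_one hpnn hπnn hprow hπrow (Δ+1) s' g)

lemma inner_chain (Δ : ℕ) (s' g : S) :
    ∑ a', π s' a' * ∑ s'', p s' a' s'' * ((policyChain p π) ^ Δ) s'' g
      = ((policyChain p π) ^ (Δ + 1)) s' g := by
  rw [pow_succ', Matrix.mul_apply]
  simp only [Finset.mul_sum]
  rw [Finset.sum_comm]
  refine Finset.sum_congr rfl fun s'' _ => ?_
  show ∑ a', π s' a' * (p s' a' s'' * ((policyChain p π) ^ Δ) s'' g)
      = policyChain p π s' s'' * ((policyChain p π) ^ Δ) s'' g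
  show _ = (∑ a', π s' a' * p s' a' s'') * ((policyChain p π) ^ Δ) s'' g
  rw [Finset.sum_mul]
  simp [mul_assoc]

include hγ0 hγ1 hpnn hπnn hprow hπrow in
lemma bar_eq (s' g : S) :
    ∑ a', π s' a' * discountedOccupancy γ p π s' a' g
      = (1 - γ) * ∑' Δ : ℕ, γ ^ Δ * ((policyChain p π) ^ (Δ + 1)) s' g := by
  unfold discountedOccupancy
  have h1 : ∀ a' : A, π s' a' * ((1 - γ) * ∑' Δ : ℕ, γ ^ Δ *
      ∑ s'', p s' a' s'' * ((policyChain p π) ^ Δ) s'' g)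
      = ∑' Δ : ℕ, π s' a' * ((1 - γ) * (γ ^ Δ *
      ∑ s'', p s' a' s'' * ((policyChain p π) ^ Δ) s'' g)) := by
    intro a'
    rw [tsum_mul_left, tsum_mul_left]
  simp only [h1]
  rw [← Summable.tsum_finsetSum (fun a' _ => by
    exact ((c_summable hγ0 hγ1 hpnn hprow hπnn hπrow s' a' g).mul_left (1-γ)).mul_left (π s' a'))]
  rw [← tsum_mul_left]
  refine tsum_congr fun Δ => ?_
  rw [← inner_chain Δ s' g]
  rw [Finset.mul_sum, Finset.mul_sum]
  exact Finset.sum_congr rfl fun a' _ => by ring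

include hγ0 hγ1 hpnn hπnn hprow hπrow in
lemma occupancy_rec (s : S) (a : A) (g : S) :
    discountedOccupancy γ p π s a g = (1 - γ) * p s a g
      + γ * ∑ s', p s a s' * ∑ a', π s' a' * discountedOccupancy γ p π s' a' g := by
  have hsum := c_summable (p := p) (π := π) hγ0 hγ1 hpnn hprow hπnn hπrow s a g
  conv_lhs => rw [discountedOccupancy, Summable.tsum_eq_zero_add hsum]
  have h0 : (γ : ℝ) ^ (0:ℕ) * ∑ s', p s a s' * ((policyChain p π) ^ (0:ℕ)) s' g
      = p s a g := by
    simp [Matrix.one_apply]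
  rw [h0]
  simp only [bar_eq hγ0 hγ1 hpnn hprow hπnn hπrow]
  have h2 : ∀ s' : S, p s a s' * ((1 - γ) * ∑' Δ : ℕ, γ ^ Δ * ((policyChain p π) ^ (Δ+1)) s' g)
      = ∑' Δ : ℕ, p s a s' * ((1 - γ) * (γ ^ Δ * ((policyChain p π) ^ (Δ+1)) s' g)) := by
    intro s'
    rw [tsum_mul_left, tsum_mul_left]
  simp only [h2]
  rw [← Summable.tsum_finsetSum (fun s' _ => by
    exact ((pow_summable hγ0 hγ1 hpnn hprow hπnn hπrow s' g).mul_left (1-γ)).mul_left (p s a s'))]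
  rw [← tsum_mul_left]
  have h3 : ∀ Δ : ℕ, γ ^ (Δ + 1) * ∑ s', p s a s' * ((policyChain p π) ^ (Δ+1)) s' g
      = γ * (γ ^ Δ * ∑ s', p s a s' * ((policyChain p π) ^ (Δ+1)) s' g) := by
    intro Δ; ring
  simp only [h3]
  rw [tsum_mul_left, tsum_mul_left]
  have h4 : ∀ Δ : ℕ, ∑ s', p s a s' * ((1 - γ) * (γ ^ Δ * ((policyChain p π) ^ (Δ+1)) s' g))
      = (1 - γ) * (γ ^ Δ * ∑ s', p s a s' * ((policyChain p π) ^ (Δ+1)) s' g) := by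
    intro Δ
    rw [Finset.mul_sum, Finset.mul_sum]
    exact Finset.sum_congr rfl fun s' _ => by ring
  simp only [h4]
  rw [tsum_mul_left]
  ring

end aux

/-- the unique fixed point of the operator `BR` is the ratio
`p₊^π(g∣s,a) / p(g)`. -/
theorem ratio_bellman_fixed_point {S A : Type*}
    [Fintype S] [Fintype A] [DecidableEq S] [Nonempty S] [Nonempty A]
    (γ : ℝ) (hγ0 : 0 ≤ γ) (hγ1 : γ < 1)
    (p : S → A → S → ℝ) (π : S → A → ℝ) (pg : S → ℝ)
    (hpnn : ∀ s a s', 0 ≤ p s a s') (hprow : ∀ s a, ∑ s', p s a s' = 1)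
    (hπnn : ∀ s a, 0 ≤ π s a) (hπrow : ∀ s, ∑ a, π s a = 1)
    (hpg : ∀ g, 0 < pg g) :
    (ratioBellmanOp γ p π pg (fun s a g => discountedOccupancy γ p π s a g / pg g)
        = fun s a g => discountedOccupancy γ p π s a g / pg g) ∧
    (∀ R : S → A → S → ℝ, ratioBellmanOp γ p π pg R = R →
        R = fun s a g => discountedOccupancy γ p π s a g / pg g) := by
  have hfix : ratioBellmanOp γ p π pg (fun s a g => discountedOccupancy γ p π s a g / pg g)
      = fun s a g => discountedOccupancy γ p π s a g / pg g := by
    funext s a g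
    show (1 - γ) * p s a g / pg g +
        γ * ∑ s', p s a s' * ∑ a', π s' a' * (discountedOccupancy γ p π s' a' g / pg g)
        = discountedOccupancy γ p π s a g / pg g
    have h1 : ∀ s' : S, ∑ a', π s' a' * (discountedOccupancy γ p π s' a' g / pg g)
        = (∑ a', π s' a' * discountedOccupancy γ p π s' a' g) / pg g := by
      intro s'
      rw [Finset.sum_div]
      exact Finset.sum_congr rfl fun a' _ => by ring
    simp only [h1]
    have h2 : ∑ s', p s a s' * ((∑ a', π s' a' * discountedOccupancy γ p π s' a' g) / pg g)
        = (∑ s', p s a s' * ∑ a', π s' a' * discountedOccupancy γ p π s' a' g) / pg g := by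
      rw [Finset.sum_div]
      exact Finset.sum_congr rfl fun s' _ => by ring
    rw [h2]
    rw [occupancy_rec hγ0 hγ1 hpnn hprow hπnn hπrow s a g]
    field_simp
  refine ⟨hfix, fun R hR => ?_⟩
  set Dq : S → A → S → ℝ := fun s a g => discountedOccupancy γ p π s a g / pg g with hDq
  set E : S → A → S → ℝ := fun s a g => R s a g - Dq s a g with hEdef
  have hE : ∀ s a g, E s a g = γ * ∑ s', p s a s' * ∑ a', π s' a' * E s' a' g := by
    intro s a g
    have h1 := congrFun (congrFun (congrFun hR s) a) g
    have h2 := congrFun (congrFun (congrFun hfix s) a) g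
    simp only [ratioBellmanOp] at h1 h2
    have key : ∑ s', p s a s' * ∑ a', π s' a' * E s' a' g
        = (∑ s', p s a s' * ∑ a', π s' a' * R s' a' g)
          - ∑ s', p s a s' * ∑ a', π s' a' * Dq s' a' g := by
      rw [← Finset.sum_sub_distrib]
      refine Finset.sum_congr rfl fun s' _ => ?_
      rw [← mul_sub, ← Finset.sum_sub_distrib]
      congr 1
      refine Finset.sum_congr rfl fun a' _ => ?_
      show π s' a' * (R s' a' g - Dq s' a' g) = _
      ring
    show R s a g - Dq s a g = _
    rw [key, mul_sub]
    have h2' : Dq s a g = (1 - γ) * p s a g / pg g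
        + γ * ∑ s', p s a s' * ∑ a', π s' a' * Dq s' a' g := h2.symm
    linarith [h1, h2']
  obtain ⟨⟨s₀, a₀, g₀⟩, hmax⟩ := Finite.exists_max
    (fun x : S × A × S => |E x.1 x.2.1 x.2.2|)
  have hmax' : ∀ s a g, |E s a g| ≤ |E s₀ a₀ g₀| := fun s a g => hmax (s, a, g)
  set Mx := |E s₀ a₀ g₀| with hMx
  have hXb : ∀ s' g, |∑ a', π s' a' * E s' a' g| ≤ Mx := by
    intro s' g
    calc |∑ a', π s' a' * E s' a' g| ≤ ∑ a', |π s' a' * E s' a' g| :=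
          Finset.abs_sum_le_sum_abs _ _
      _ = ∑ a', π s' a' * |E s' a' g| := Finset.sum_congr rfl fun a' _ => by
          rw [abs_mul, abs_of_nonneg (hπnn s' a')]
      _ ≤ ∑ a', π s' a' * Mx := Finset.sum_le_sum fun a' _ =>
          mul_le_mul_of_nonneg_left (hmax' s' a' g) (hπnn s' a')
      _ = Mx := by rw [← Finset.sum_mul, hπrow, one_mul]
  have hMle : Mx ≤ γ * Mx := by
    calc Mx = |γ * ∑ s', p s₀ a₀ s' * ∑ a', π s' a' * E s' a' g₀| := by
          rw [hMx, hE s₀ a₀ g₀]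
      _ = γ * |∑ s', p s₀ a₀ s' * ∑ a', π s' a' * E s' a' g₀| := by
          rw [abs_mul, abs_of_nonneg hγ0]
      _ ≤ γ * Mx := by
          refine mul_le_mul_of_nonneg_left ?_ hγ0
          calc |∑ s', p s₀ a₀ s' * ∑ a', π s' a' * E s' a' g₀|
              ≤ ∑ s', |p s₀ a₀ s' * ∑ a', π s' a' * E s' a' g₀| :=
                Finset.abs_sum_le_sum_abs _ _
            _ = ∑ s', p s₀ a₀ s' * |∑ a', π s' a' * E s' a' g₀| :=
                Finset.sum_congr rfl fun s' _ => by
                  rw [abs_mul, abs_of_nonneg (hpnn s₀ a₀ s')]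
            _ ≤ ∑ s', p s₀ a₀ s' * Mx := Finset.sum_le_sum fun s' _ =>
                mul_le_mul_of_nonneg_left (hXb s' g₀) (hpnn s₀ a₀ s')
            _ = Mx := by rw [← Finset.sum_mul, hprow, one_mul]
  have hM0 : 0 ≤ Mx := abs_nonneg _
  have hMzero : Mx = 0 := by nlinarith
  funext s a g
  have : |E s a g| ≤ 0 := hMzero ▸ hmax' s a g
  have hE0 : E s a g = 0 := abs_eq_zero.mp (le_antisymm this (abs_nonneg _))
  have := sub_eq_zero.mp hE0
  exact this
end

section
/- For γ, λ ∈ (0,1) and a label y satisfying the probabilistic assignment y = 1 with probability proportional to (1-γ)p₁ and y = γw/(γw+1) with probability proportional to (1+γw)p₀ (where p₁, p₀ > 0), the conditional expectation is E[y] = ((1-γ)p₁/p₀ + γw) / ((1-γ)p₁/p₀ + γw + 1), and consequently E[y]/(1 - E[y]) = (1-γ)p₁/p₀ + γw. -/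
/-!
The weight `(1 + γw) p₀` of a negative cancels the denominator of its label `γw/(γw + 1)`,
so the expected label is `(r p₀)/(r p₀ + p₀)` with `r = (1-γ)p₁/p₀ + γw`; dividing by `p₀`
gives `r/(r + 1)`, whose odds are `r`.
-/

theorem div_add_one_div_one_sub_div_add_one {K : Type*} [Field K] {x : K} (hx : x + 1 ≠ 0) :
    x / (x + 1) / (1 - x / (x + 1)) = x := by
  have hsub : 1 - x / (x + 1) = 1 / (x + 1) := by field_simp; ring
  rw [hsub, div_div_div_cancel_right₀ hx, div_one]

theorem mixture_label_mean_eq {K : Type*} [Field K] {a c p : K} (hp : p ≠ 0)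
    (hc : c + 1 ≠ 0) :
    (a * 1 + (1 + c) * p * (c / (c + 1))) / (a + (1 + c) * p) = (a / p + c) / (a / p + c + 1) := by
  have hden : a + (1 + c) * p = p * (a / p + c + 1) := by field_simp; ring
  have hnum : a * 1 + (1 + c) * p * (c / (c + 1)) = p * (a / p + c) := by field_simp; ring
  rw [hden, hnum, mul_div_mul_left _ _ hp]

theorem expected_td_target_general (γ p₁ p₀ w : ℝ)
    (hγ : γ ∈ Set.Ioo (0:ℝ) 1)
    (hp₁ : 0 < p₁) (hp₀ : 0 < p₀) (hw : 0 ≤ w) :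
    (((1 - γ) * p₁ * 1 + (1 + γ * w) * p₀ * (γ * w / (γ * w + 1))) /
        ((1 - γ) * p₁ + (1 + γ * w) * p₀)
      = ((1 - γ) * p₁ / p₀ + γ * w) / ((1 - γ) * p₁ / p₀ + γ * w + 1)) ∧
    ((((1 - γ) * p₁ * 1 + (1 + γ * w) * p₀ * (γ * w / (γ * w + 1))) /
        ((1 - γ) * p₁ + (1 + γ * w) * p₀)) /
      (1 - ((1 - γ) * p₁ * 1 + (1 + γ * w) * p₀ * (γ * w / (γ * w + 1))) /
        ((1 - γ) * p₁ + (1 + γ * w) * p₀))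
      = (1 - γ) * p₁ / p₀ + γ * w) := by
  obtain ⟨hγ0, hγ1⟩ := hγ
  have hγw : 0 ≤ γ * w := mul_nonneg hγ0.le hw
  have hr : 0 < (1 - γ) * p₁ / p₀ + γ * w := by
    have : 0 < (1 - γ) * p₁ / p₀ := div_pos (mul_pos (sub_pos.mpr hγ1) hp₁) hp₀
    linarith
  have hmean := mixture_label_mean_eq (a := (1 - γ) * p₁) hp₀.ne' (by positivity : γ * w + 1 ≠ 0)
  refine ⟨hmean, ?_⟩
  rw [hmean]
  exact div_add_one_div_one_sub_div_add_one (by positivity)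

/-- with positives sampled with weight `(1-γ) p₁` (label `y = 1`) and
negatives with weight `(1+γw) p₀` (label `y = γw/(γw+1)`), the conditional expectation
of the label is `E[y] = ((1-γ)p₁/p₀ + γw) / ((1-γ)p₁/p₀ + γw + 1)`, and hence
`E[y]/(1 - E[y]) = (1-γ)p₁/p₀ + γw`. -/
theorem expected_td_target (γ lam p₁ p₀ w : ℝ)
    (hγ : γ ∈ Set.Ioo (0:ℝ) 1) (hlam : lam ∈ Set.Ioo (0:ℝ) 1)
    (hp₁ : 0 < p₁) (hp₀ : 0 < p₀) (hw : 0 ≤ w) :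
    (((1 - γ) * p₁ * 1 + (1 + γ * w) * p₀ * (γ * w / (γ * w + 1))) /
        ((1 - γ) * p₁ + (1 + γ * w) * p₀)
      = ((1 - γ) * p₁ / p₀ + γ * w) / ((1 - γ) * p₁ / p₀ + γ * w + 1)) ∧
    ((((1 - γ) * p₁ * 1 + (1 + γ * w) * p₀ * (γ * w / (γ * w + 1))) /
        ((1 - γ) * p₁ + (1 + γ * w) * p₀)) /
      (1 - ((1 - γ) * p₁ * 1 + (1 + γ * w) * p₀ * (γ * w / (γ * w + 1))) /
        ((1 - γ) * p₁ + (1 + γ * w) * p₀))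
      = (1 - γ) * p₁ / p₀ + γ * w) :=
  expected_td_target_general γ p₁ p₀ w hγ hp₁ hp₀ hw
end

section
/- Consider a Markov process with n ≥ 1 states where every state transitions deterministically to itself. For γ, λ ∈ (0,1) with λγ/n < 1, the unique solution Q of the hindsight-relabeled Bellman equation Q = (1-λ)·1 + (λ/n)·γQ is Q* = (1-λ)/(1 - λγ/n), and Q* differs from the true discounted occupancy value 1 (i.e., Q* < 1 whenever λ(1 - γ/n) > 0). -/
/-- in the self-absorbing `n`-state Markov process, the hindsight-relabeled
Bellman equation `Q = (1-λ)·1 + (λ/n)·γQ` has the unique solution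
`Q* = (1-λ)/(1 - λγ/n)`, and `Q* < 1` whenever `λ(1 - γ/n) > 0`. -/
theorem hindsight_self_loop_fixed_point (γ lam : ℝ) (n : ℕ) (hn : 1 ≤ n)
    (hγ : γ ∈ Set.Ioo (0:ℝ) 1) (hlam : lam ∈ Set.Ioo (0:ℝ) 1)
    (hsmall : lam * γ / (n : ℝ) < 1) :
    (∃! Q : ℝ, Q = (1 - lam) * 1 + (lam / (n : ℝ)) * (γ * Q)) ∧
    ((1 - lam) / (1 - lam * γ / (n : ℝ)) = (1 - lam) * 1 +
        (lam / (n : ℝ)) * (γ * ((1 - lam) / (1 - lam * γ / (n : ℝ))))) ∧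
    (lam * (1 - γ / (n : ℝ)) > 0 → (1 - lam) / (1 - lam * γ / (n : ℝ)) < 1) := by
  have hn' : (0:ℝ) < (n:ℝ) := by exact_mod_cast hn
  have hd : (0:ℝ) < 1 - lam * γ / (n : ℝ) := by linarith
  have hdne : (1 - lam * γ / (n : ℝ)) ≠ 0 := ne_of_gt hd
  have hfix : (1 - lam) / (1 - lam * γ / (n : ℝ)) = (1 - lam) * 1 +
      (lam / (n : ℝ)) * (γ * ((1 - lam) / (1 - lam * γ / (n : ℝ)))) := by
    have hne : (n:ℝ) ≠ 0 := ne_of_gt hn'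
    have h2 : ((n:ℝ) - lam * γ) ≠ 0 := by
      have : 0 < (n:ℝ) - lam * γ := by
        have := (div_lt_one hn').mp hsmall
        linarith
      exact ne_of_gt this
    field_simp
    ring
  refine ⟨⟨(1 - lam) / (1 - lam * γ / (n : ℝ)), hfix, ?_⟩, hfix, ?_⟩
  · intro y hy
    have : y * (1 - lam * γ / (n : ℝ)) = 1 - lam := by
      field_simp at hy ⊢
      linarith
    exact (eq_div_iff hdne).mpr this
  · intro h
    rw [div_lt_one hd]
    have : 0 < lam - lam * γ / (n:ℝ) := by
      have := mul_sub lam 1 (γ / (n:ℝ))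
      rw [mul_div_assoc]
      nlinarith
    linarith
end

section
/- In the two-state example, the normalized Q-learning prediction Q₁₁/(Q₁₁+Q₁₂) = (2-λ+γλ)/(4-2λ+3γλ) differs from the normalized true discounted occupancy p_+(s₁|s₁) = (2-2γ)/(2-γ) for generic λ, γ ∈ (0,1); in particular, there exist λ, γ ∈ (0,1) with (2-λ+γλ)/(4-2λ+3γλ) ≠ (2-2γ)/(2-γ). -/
/-!
Since `Q₁₂ = Q₁₁ · (2 - λ + 2γλ) / (2 - λ + γλ)`, the common factor `Q₁₁` cancels from the
normalized prediction. Cross-multiplying, the prediction agrees with the occupancy exactly on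
the zero set of the polynomial `-4 + 6γ + 2λ - 7γλ + 5γ²λ`, which misses `γ = λ = 1/2`.
-/

open Set

section TwoStateChain

variable {γ lam : ℝ}

lemma two_sub_mul_pos_of_mem_Ioo (hγ : γ ∈ Ioo (0 : ℝ) 1) (hl : lam ∈ Ioo (0 : ℝ) 1) :
    0 < 2 - γ * lam := by
  nlinarith [hγ.2, hl.2, hγ.1, hl.1]

lemma two_sub_add_mul_pos_of_mem_Ioo (hγ : γ ∈ Ioo (0 : ℝ) 1) (hl : lam ∈ Ioo (0 : ℝ) 1) :
    0 < 2 - lam + γ * lam := by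
  nlinarith [mul_pos hγ.1 hl.1, hl.2]

lemma normalized_hindsight_q_eq (h₁ : 2 - γ * lam ≠ 0) (h₂ : 2 - lam + γ * lam ≠ 0)
    (hl : lam ≠ 1) :
    ((2 - 2 * lam) / (2 - γ * lam)) /
        ((2 - 2 * lam) / (2 - γ * lam) +
          2 * (1 - lam) * (2 - lam + 2 * γ * lam) /
            ((2 - γ * lam) * (2 - lam + γ * lam)))
      = (2 - lam + γ * lam) / (4 - 2 * lam + 3 * γ * lam) := by
  have hq₁₁ : (2 - 2 * lam) / (2 - γ * lam) ≠ 0 :=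
    div_ne_zero (by intro h; exact hl (by linarith)) h₁
  have hq₁₂ : 2 * (1 - lam) * (2 - lam + 2 * γ * lam) / ((2 - γ * lam) * (2 - lam + γ * lam))
      = (2 - 2 * lam) / (2 - γ * lam) * ((2 - lam + 2 * γ * lam) / (2 - lam + γ * lam)) := by
    rw [div_mul_div_comm]; ring
  rw [hq₁₂, ← mul_one_add, div_mul_cancel_left₀ hq₁₁, one_add_div h₂, inv_div]
  ring_nf

lemma normalized_hindsight_q_eq_occupancy_iff (h₁ : 4 - 2 * lam + 3 * γ * lam ≠ 0)
    (h₂ : 2 - γ ≠ 0) :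
    (2 - lam + γ * lam) / (4 - 2 * lam + 3 * γ * lam) = (2 - 2 * γ) / (2 - γ) ↔
      -4 + 6 * γ + 2 * lam - 7 * γ * lam + 5 * γ ^ 2 * lam = 0 := by
  rw [div_eq_div_iff h₁ h₂]
  constructor <;> intro h <;> linear_combination h

end TwoStateChain

/-- in the two-state example, the normalized hindsight Q-learning
prediction satisfies `Q₁₁/(Q₁₁+Q₁₂) = (2-λ+γλ)/(4-2λ+3γλ)` for all `λ, γ ∈ (0,1)`,
and there exist `λ, γ ∈ (0,1)` for which it differs from the normalized true
discounted occupancy `(2-2γ)/(2-γ)`. -/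
theorem normalized_q_differs_from_occupancy :
    (∀ γ lam : ℝ, γ ∈ Set.Ioo (0:ℝ) 1 → lam ∈ Set.Ioo (0:ℝ) 1 →
      ((2 - 2 * lam) / (2 - γ * lam)) /
        ((2 - 2 * lam) / (2 - γ * lam) +
          2 * (1 - lam) * (2 - lam + 2 * γ * lam) /
            ((2 - γ * lam) * (2 - lam + γ * lam)))
        = (2 - lam + γ * lam) / (4 - 2 * lam + 3 * γ * lam)) ∧
    (∃ γ lam : ℝ, γ ∈ Set.Ioo (0:ℝ) 1 ∧ lam ∈ Set.Ioo (0:ℝ) 1 ∧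
      (2 - lam + γ * lam) / (4 - 2 * lam + 3 * γ * lam) ≠ (2 - 2 * γ) / (2 - γ)) := by
  refine ⟨fun γ lam hγ hl => ?_, ?_⟩
  · exact normalized_hindsight_q_eq (two_sub_mul_pos_of_mem_Ioo hγ hl).ne'
      (two_sub_add_mul_pos_of_mem_Ioo hγ hl).ne' hl.2.ne
  · have half_mem : (1 / 2 : ℝ) ∈ Ioo (0 : ℝ) 1 := by norm_num
    refine ⟨1 / 2, 1 / 2, half_mem, half_mem, ?_⟩
    rw [Ne, normalized_hindsight_q_eq_occupancy_iff (by norm_num) (by norm_num)]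
    norm_num
end
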